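/- arXiv:1512.04432 — 4 statements merged into one kernel-verified Lean document; each statement's English description precedes it below -/
import Mathlib

section
/- The generalized Borel transform intertwines the Farey transfer operator with M + N: for all φ ∈ L²(m) and x ∈ (0,1], (1/(1+x)²)·ℬ[φ](x/(1+x)) = ℬ[Mφ](x) and (1/(1+x)²)·ℬ[φ](1/(1+x)) = ℬ[Nφ](x), where (Mφ)(t) = e^{-t}φ(t) and (Nφ)(t) = ∫₀^∞ J₁(2√(st)) (st)^{-1/2} φ(s) dm(s), with J₁ the Bessel function of the first kind of order 1. -/
open Set MeasureTheory Real

/-- The measure `dm(t) = t e^{-t} dt` on `(0,∞)`. -/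
noncomputable def mMeasure : Measure ℝ :=
  (volume.restrict (Ioi (0:ℝ))).withDensity (fun t => ENNReal.ofReal (t * Real.exp (-t)))

/-- The Bessel function of the first kind of order `1`, via its power series. -/
noncomputable def besselJ1 (z : ℝ) : ℝ :=
  ∑' k : ℕ, (-1)^k / (k.factorial * (k+1).factorial) * (z/2)^(2*k+1)

/-- The generalized Borel transform `ℬ[φ](x) = x⁻² ∫₀^∞ e^{-t/x} eᵗ φ(t) dm(t)`. -/
noncomputable def borelT (φ : ℝ → ℝ) (x : ℝ) : ℝ :=
  (1/x^2) * ∫ t in Ioi (0:ℝ), Real.exp (-t/x) * Real.exp t * φ t ∂mMeasure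

/-- The integral operator `N`. -/
noncomputable def opN (φ : ℝ → ℝ) (t : ℝ) : ℝ :=
  ∫ s in Ioi (0:ℝ), besselJ1 (2 * Real.sqrt (s*t)) * Real.sqrt (1/(s*t)) * φ s ∂mMeasure

/-! The first identity is the substitution `e^{-t(1+x)/x} = e^{-t/x} e^{-t}` in the integrand.
For the second, the left side is `∫ e^{-sx} φ(s) dm(s)`. On the right, Fubini reduces everything to
the Laplace transform `∫₀^∞ e^{-t/x} √t J₁(2√(st)) dt = √s x² e^{-sx}`, computed term by term from
the power series of `J₁`. Fubini applies because the kernel is bounded by `(st)^{-1/2}`, as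
`|J₁| ≤ 1` by Poisson's integral `J₁(z) = π⁻¹ ∫₀^π sin θ sin(z sin θ) dθ`, and `s ↦ s^{-1/2}` lies
in `L²(m)`, so that `s^{-1/2} φ(s)` is `m`-integrable by Cauchy–Schwarz. -/

lemma integral_sin_pow_even_eq_factorial (n : ℕ) :
    ∫ θ in 0..π, sin θ ^ (2 * n) = π * (2 * n).factorial / (4 ^ n * n.factorial ^ 2) := by
  rw [integral_sin_pow_even, mul_div_assoc]
  congr 1
  induction n with
  | zero => simp
  | succ k ih =>
    rw [Finset.prod_range_succ, ih, show 2 * (k + 1) = 2 * k + 1 + 1 by ring,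
      Nat.factorial_succ, Nat.factorial_succ, Nat.factorial_succ]
    push_cast
    field_simp
    ring_nf

lemma hasSum_besselJ1_series (z : ℝ) :
    HasSum (fun k : ℕ => (-1) ^ k / (k.factorial * (k + 1).factorial) * (z / 2) ^ (2 * k + 1))
      (π⁻¹ * ∫ θ in 0..π, sin θ * sin (z * sin θ)) := by
  set F : ℕ → ℝ → ℝ := fun k θ => (-1) ^ k * z ^ (2 * k + 1) / (2 * k + 1).factorial *
    sin θ ^ (2 * (k + 1))
  have hF : ∀ θ, HasSum (fun k => F k θ) (sin θ * sin (z * sin θ)) := fun θ => by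
    refine ((Real.hasSum_sin (z * sin θ)).mul_left (sin θ)).congr_fun fun k => ?_
    simp only [F]
    ring
  have hbound : ∀ k θ, ‖F k θ‖ ≤ |z| ^ (2 * k + 1) / (2 * k + 1).factorial := fun k θ => by
    simp only [F, norm_mul, norm_div, norm_pow, norm_neg, norm_one, one_pow, one_mul,
      Real.norm_eq_abs, Nat.abs_cast]
    exact mul_le_of_le_one_right (by positivity)
      (pow_le_one₀ (abs_nonneg _) (abs_sin_le_one θ))
  have hsum : HasSum (fun k => ∫ θ in 0..π, F k θ) (∫ θ in 0..π, sin θ * sin (z * sin θ)) :=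
    intervalIntegral.hasSum_integral_of_dominated_convergence
      (fun k _ => |z| ^ (2 * k + 1) / (2 * k + 1).factorial)
      (fun k => (Continuous.aestronglyMeasurable (by fun_prop)))
      (fun k => .of_forall fun θ _ => hbound k θ)
      (.of_forall fun _ _ => (Real.summable_pow_div_factorial |z|).comp_injective
        (fun a b h => by simpa using h))
      intervalIntegrable_const (.of_forall fun θ _ => hF θ)
  have hterm : ∀ k, ∫ θ in 0..π, F k θ =
      π * ((-1) ^ k / (k.factorial * (k + 1).factorial) * (z / 2) ^ (2 * k + 1)) := fun k => by
    rw [intervalIntegral.integral_const_mul, integral_sin_pow_even_eq_factorial,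
      show 2 * (k + 1) = 2 * k + 1 + 1 by ring, Nat.factorial_succ (2 * k + 1),
      Nat.factorial_succ k, div_pow, show (4 : ℝ) ^ (k + 1) = 2 ^ (2 * k + 1) * 2 by
        rw [pow_succ, pow_succ, pow_mul]; norm_num; ring]
    push_cast
    field_simp
    ring
  simpa only [hterm, ← mul_assoc, inv_mul_cancel₀ pi_ne_zero, one_mul] using hsum.mul_left π⁻¹

lemma besselJ1_eq_integral (z : ℝ) :
    besselJ1 z = π⁻¹ * ∫ θ in 0..π, sin θ * sin (z * sin θ) :=
  (hasSum_besselJ1_series z).tsum_eq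

lemma hasSum_besselJ1 (z : ℝ) :
    HasSum (fun k : ℕ => (-1) ^ k / (k.factorial * (k + 1).factorial) * (z / 2) ^ (2 * k + 1))
      (besselJ1 z) :=
  besselJ1_eq_integral z ▸ hasSum_besselJ1_series z

lemma abs_besselJ1_le_one (z : ℝ) : |besselJ1 z| ≤ 1 := by
  have h : ‖∫ θ in 0..π, sin θ * sin (z * sin θ)‖ ≤ 1 * |π - 0| :=
    intervalIntegral.norm_integral_le_of_norm_le_const fun θ _ => by
      rw [norm_mul]
      exact mul_le_one₀ (abs_sin_le_one _) (norm_nonneg _) (abs_sin_le_one _)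
  rw [one_mul, sub_zero, abs_of_pos pi_pos, Real.norm_eq_abs] at h
  rw [besselJ1_eq_integral, abs_mul, abs_inv, abs_of_pos pi_pos]
  exact inv_mul_le_one_of_le₀ h pi_pos.le

@[fun_prop]
lemma continuous_besselJ1 : Continuous besselJ1 := by
  rw [funext besselJ1_eq_integral]
  fun_prop

lemma integral_pow_mul_exp_neg_div (n : ℕ) {x : ℝ} (hx : 0 < x) :
    ∫ t in Ioi (0 : ℝ), t ^ n * exp (-t / x) = n.factorial * x ^ (n + 1) := by
  have h := integral_rpow_mul_exp_neg_mul_Ioi (a := n + 1) (by positivity) (inv_pos.2 hx)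
  rw [one_div, inv_inv, add_sub_cancel_right, Real.Gamma_nat_eq_factorial, ← Nat.cast_succ,
    Real.rpow_natCast] at h
  rw [mul_comm, ← h]
  refine setIntegral_congr_fun measurableSet_Ioi fun t _ => ?_
  simp only [Real.rpow_natCast, div_eq_inv_mul, mul_neg]

lemma integrableOn_pow_mul_exp_neg_div (n : ℕ) {x : ℝ} (hx : 0 < x) :
    IntegrableOn (fun t => t ^ n * exp (-t / x)) (Ioi 0) :=
  -- a non-integrable function has integral `0`
  Integrable.of_integral_ne_zero <| by
    rw [integral_pow_mul_exp_neg_div n hx]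
    positivity

lemma hasSum_sqrt_mul_besselJ1_two_sqrt {s t : ℝ} (hs : 0 ≤ s) (ht : 0 ≤ t) :
    HasSum (fun k : ℕ => (-1) ^ k / (k.factorial * (k + 1).factorial) * (s ^ k * √s) * t ^ (k + 1))
      (√t * besselJ1 (2 * √(s * t))) := by
  refine ((hasSum_besselJ1 _).mul_left √t).congr_fun fun k => ?_
  have hst : √(s * t) ^ (2 * k + 1) = (s * t) ^ k * (√s * √t) := by
    rw [pow_succ, pow_mul, Real.sq_sqrt (mul_nonneg hs ht), Real.sqrt_mul hs]
  rw [mul_div_cancel_left₀ _ two_ne_zero, hst]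
  linear_combination -(-1) ^ k / (k.factorial * (k + 1).factorial) * s ^ k * t ^ k * √s *
    Real.mul_self_sqrt ht

lemma integral_exp_neg_div_mul_sqrt_mul_besselJ1 {s x : ℝ} (hs : 0 ≤ s) (hx : 0 < x) :
    ∫ t in Ioi (0 : ℝ), exp (-t / x) * (√t * besselJ1 (2 * √(s * t))) =
      √s * x ^ 2 * exp (-(s * x)) := by
  set c : ℕ → ℝ := fun k => (-1) ^ k / (k.factorial * (k + 1).factorial) * (s ^ k * √s)
  set F : ℕ → ℝ → ℝ := fun k t => c k * (t ^ (k + 1) * exp (-t / x))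
  have hint : ∀ k, IntegrableOn (F k) (Ioi 0) := fun k =>
    (integrableOn_pow_mul_exp_neg_div (k + 1) hx).const_mul _
  have hterm : ∀ k, ∫ t in Ioi (0 : ℝ), F k t = √s * x ^ 2 * ((-(s * x)) ^ k / k.factorial) :=
    fun k => by
      rw [integral_const_mul, integral_pow_mul_exp_neg_div (k + 1) hx]
      simp only [c, Nat.factorial_succ]
      push_cast
      field_simp
      ring
  have hnorm : ∀ k, ∫ t in Ioi (0 : ℝ), ‖F k t‖ = ‖∫ t in Ioi (0 : ℝ), F k t‖ := fun k => by
    have hF : ∀ t ∈ Ioi (0 : ℝ), ‖F k t‖ = ‖c k‖ * (t ^ (k + 1) * exp (-t / x)) :=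
      fun t (ht : 0 < t) => by
        rw [norm_mul, Real.norm_of_nonneg (by positivity : 0 ≤ t ^ (k + 1) * exp (-t / x))]
    rw [setIntegral_congr_fun measurableSet_Ioi hF, integral_const_mul, integral_const_mul,
      norm_mul (c k), Real.norm_of_nonneg <| setIntegral_nonneg measurableSet_Ioi
        fun t (ht : 0 < t) => by positivity]
  have hsum := hasSum_integral_of_summable_integral_norm hint <| by
    simp only [hnorm, hterm, norm_mul]
    exact (NormedSpace.norm_expSeries_div_summable _).mul_left _
  have hpt : ∀ t ∈ Ioi (0 : ℝ), exp (-t / x) * (√t * besselJ1 (2 * √(s * t))) = ∑' k, F k t :=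
    fun t (ht : 0 < t) => (((hasSum_sqrt_mul_besselJ1_two_sqrt hs ht.le).mul_left
      (exp (-t / x))).congr_fun fun k => by simp only [F, c]; ring).tsum_eq.symm
  rw [setIntegral_congr_fun measurableSet_Ioi hpt]
  have hexp : HasSum (fun k : ℕ => √s * x ^ 2 * ((-(s * x)) ^ k / k.factorial))
      (√s * x ^ 2 * exp (-(s * x))) := by
    rw [Real.exp_eq_exp_ℝ]
    exact (NormedSpace.expSeries_div_hasSum_exp (-(s * x))).mul_left (√s * x ^ 2)
  exact hsum.unique ((funext hterm).symm ▸ hexp)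

lemma mMeasure_restrict_Ioi : mMeasure.restrict (Ioi 0) = mMeasure := by
  rw [mMeasure, restrict_withDensity measurableSet_Ioi, Measure.restrict_restrict measurableSet_Ioi,
    inter_self]

instance : SFinite mMeasure := by
  rw [mMeasure]
  infer_instance

lemma ae_mMeasure_pos : ∀ᵐ t ∂mMeasure, 0 < t := by
  rw [← mMeasure_restrict_Ioi]
  exact ae_restrict_mem measurableSet_Ioi

lemma eqOn_mMeasure_density_smul (f : ℝ → ℝ) :
    EqOn (fun t => (ENNReal.ofReal (t * exp (-t))).toReal • f t) (fun t => t * exp (-t) * f t)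
      (Ioi 0) := fun t (ht : 0 < t) => by
  simp only [smul_eq_mul, ENNReal.toReal_ofReal (by positivity : 0 ≤ t * exp (-t))]

lemma integral_mMeasure (f : ℝ → ℝ) :
    ∫ t, f t ∂mMeasure = ∫ t in Ioi 0, t * exp (-t) * f t := by
  rw [mMeasure, integral_withDensity_eq_integral_toReal_smul (by fun_prop)
    (.of_forall fun _ => ENNReal.ofReal_lt_top)]
  exact setIntegral_congr_fun measurableSet_Ioi (eqOn_mMeasure_density_smul f)

lemma integrable_mMeasure_iff {f : ℝ → ℝ} :
    Integrable f mMeasure ↔ IntegrableOn (fun t => t * exp (-t) * f t) (Ioi 0) := by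
  rw [mMeasure, integrable_withDensity_iff_integrable_smul' (by fun_prop)
    (.of_forall fun _ => ENNReal.ofReal_lt_top)]
  exact integrableOn_congr_fun (eqOn_mMeasure_density_smul f) measurableSet_Ioi

lemma memLp_sqrt_one_div_mMeasure : MemLp (fun s => √(1 / s)) 2 mMeasure := by
  refine (memLp_two_iff_integrable_sq (by fun_prop)).2 ?_
  rw [integrable_mMeasure_iff]
  refine (exp_neg_integrableOn_Ioi 0 one_pos).congr_fun (fun t (ht : 0 < t) => ?_)
    measurableSet_Ioi
  rw [Real.sq_sqrt (by positivity)]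
  field_simp

lemma integrable_sqrt_one_div_mul_of_memLp_two {φ : ℝ → ℝ} (hφ : MemLp φ 2 mMeasure) :
    Integrable (fun s => √(1 / s) * φ s) mMeasure :=
  memLp_one_iff_integrable.1 (hφ.mul memLp_sqrt_one_div_mMeasure)

noncomputable def besselKernel (s t : ℝ) : ℝ :=
  besselJ1 (2 * √(s * t)) * √(1 / (s * t))

lemma opN_eq_integral_besselKernel (φ : ℝ → ℝ) (t : ℝ) :
    opN φ t = ∫ s, besselKernel s t * φ s ∂mMeasure := by
  rw [opN, mMeasure_restrict_Ioi]
  rfl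

lemma abs_besselKernel_le {s t : ℝ} (hs : 0 ≤ s) :
    |besselKernel s t| ≤ √(1 / s) * √(1 / t) := by
  rw [besselKernel, ← one_div_mul_one_div, Real.sqrt_mul (one_div_nonneg.2 hs), abs_mul,
    abs_of_nonneg (mul_nonneg (Real.sqrt_nonneg _) (Real.sqrt_nonneg _))]
  exact mul_le_of_le_one_left (by positivity) (abs_besselJ1_le_one _)

lemma integral_exp_neg_div_mul_besselKernel {s x : ℝ} (hs : 0 < s) (hx : 0 < x) :
    ∫ t, exp (-t / x) * exp t * besselKernel s t ∂mMeasure = x ^ 2 * exp (-(s * x)) := by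
  have hpt : ∀ t ∈ Ioi (0 : ℝ),
      t * exp (-t) * (exp (-t / x) * exp t * besselKernel s t) =
        (√s)⁻¹ * (exp (-t / x) * (√t * besselJ1 (2 * √(s * t)))) := fun t (ht : 0 < t) => by
    rw [besselKernel, one_div, Real.sqrt_inv, Real.sqrt_mul hs.le, mul_inv]
    calc _ = (√s)⁻¹ * (t / √t) * (exp (-t) * exp t) * exp (-t / x) * besselJ1 (2 * (√s * √t)) := by
          ring
      _ = _ := by rw [Real.div_sqrt, ← Real.exp_add, neg_add_cancel, Real.exp_zero]; ring
  rw [integral_mMeasure, setIntegral_congr_fun measurableSet_Ioi hpt, integral_const_mul,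
    integral_exp_neg_div_mul_sqrt_mul_besselJ1 hs.le hx]
  field_simp

lemma integrable_exp_neg_div_mul_exp_mul_sqrt_one_div {x : ℝ} (hx : 0 < x) :
    Integrable (fun t => exp (-t / x) * exp t * √(1 / t)) mMeasure := by
  rw [integrable_mMeasure_iff]
  refine (integrableOn_rpow_mul_exp_neg_mul_rpow (p := 1) (s := 1 / 2) (b := 1 / x)
    (by norm_num) one_pos (by positivity)).congr_fun (fun t (ht : 0 < t) => ?_) measurableSet_Ioi
  simp only [Real.rpow_one, ← Real.sqrt_eq_rpow]
  calc _ = (t / √t) * (exp (-t) * exp t) * exp (-t / x) := by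
        rw [Real.div_sqrt, ← Real.exp_add, neg_add_cancel, Real.exp_zero]; ring_nf
    _ = _ := by rw [one_div, Real.sqrt_inv]; ring

lemma integrable_besselKernel_prod {φ : ℝ → ℝ} (hφ : MemLp φ 2 mMeasure) {x : ℝ} (hx : 0 < x) :
    Integrable (fun p : ℝ × ℝ => exp (-p.1 / x) * exp p.1 * (besselKernel p.2 p.1 * φ p.2))
      (mMeasure.prod mMeasure) := by
  refine ((integrable_exp_neg_div_mul_exp_mul_sqrt_one_div hx).mul_prod
    (integrable_sqrt_one_div_mul_of_memLp_two hφ)).mono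
    ((Measurable.aestronglyMeasurable (by fun_prop)).mul
      ((Measurable.aestronglyMeasurable (by unfold besselKernel; fun_prop)).mul
        hφ.1.comp_snd)) ?_
  filter_upwards [Measure.quasiMeasurePreserving_snd.ae ae_mMeasure_pos] with p hp
  simp only [norm_mul, Real.norm_eq_abs, abs_of_pos (Real.exp_pos _),
    abs_of_nonneg (Real.sqrt_nonneg _)]
  calc _ ≤ exp (-p.1 / x) * exp p.1 * ((√(1 / p.2) * √(1 / p.1)) * |φ p.2|) := by
        gcongr
        exact abs_besselKernel_le hp.le
    _ = _ := by ring

lemma integral_exp_neg_div_mul_opN {φ : ℝ → ℝ} (hφ : MemLp φ 2 mMeasure) {x : ℝ} (hx : 0 < x) :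
    ∫ t, exp (-t / x) * exp t * opN φ t ∂mMeasure =
      x ^ 2 * ∫ s, exp (-(s * x)) * φ s ∂mMeasure := by
  calc ∫ t, exp (-t / x) * exp t * opN φ t ∂mMeasure
      = ∫ t, ∫ s, exp (-t / x) * exp t * (besselKernel s t * φ s) ∂mMeasure ∂mMeasure := by
        simp only [opN_eq_integral_besselKernel, integral_const_mul]
    _ = ∫ s, ∫ t, exp (-t / x) * exp t * (besselKernel s t * φ s) ∂mMeasure ∂mMeasure :=
        integral_integral_swap (integrable_besselKernel_prod hφ hx)
    _ = ∫ s, x ^ 2 * (exp (-(s * x)) * φ s) ∂mMeasure := by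
        refine integral_congr_ae (ae_mMeasure_pos.mono fun s hs => ?_)
        dsimp only
        rw [← mul_assoc, ← integral_exp_neg_div_mul_besselKernel hs hx, ← integral_mul_const]
        simp only [mul_assoc]
    _ = x ^ 2 * ∫ s, exp (-(s * x)) * φ s ∂mMeasure := integral_const_mul _ _

lemma one_div_one_add_sq_mul_borelT_div_one_add (φ : ℝ → ℝ) {x : ℝ} (hx : x ≠ 0)
    (hx' : 1 + x ≠ 0) :
    (1 / (1 + x) ^ 2) * borelT φ (x / (1 + x)) = borelT (fun t => exp (-t) * φ t) x := by
  simp only [borelT, ← mul_assoc, ← Real.exp_add]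
  congr 1
  · field_simp
  · congr 1 with t
    congr 2
    field_simp
    ring

lemma one_div_one_add_sq_mul_borelT_one_div_one_add {φ : ℝ → ℝ} (hφ : MemLp φ 2 mMeasure)
    {x : ℝ} (hx : 0 < x) :
    (1 / (1 + x) ^ 2) * borelT φ (1 / (1 + x)) = borelT (opN φ) x := by
  simp only [borelT, mMeasure_restrict_Ioi, integral_exp_neg_div_mul_opN hφ hx, ← mul_assoc]
  congr 1
  · field_simp
  · congr 1 with t
    rw [← Real.exp_add]
    congr 2
    field_simp
    ring

/-- The Borel transform intertwines the two branches of the Farey transfer operator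
with the operators `M` and `N` on `L²(m)`. -/
theorem borel_intertwines (φ : ℝ → ℝ) (hφ : MemLp φ 2 mMeasure)
    (x : ℝ) (hx : x ∈ Ioc (0:ℝ) 1) :
    (1/(1+x)^2) * borelT φ (x/(1+x)) = borelT (fun t => Real.exp (-t) * φ t) x ∧
    (1/(1+x)^2) * borelT φ (1/(1+x)) = borelT (opN φ) x :=
  ⟨one_div_one_add_sq_mul_borelT_div_one_add φ hx.1.ne' (by linarith [hx.1]),
    one_div_one_add_sq_mul_borelT_one_div_one_add hφ hx.1⟩
end

section
/- For all nonnegative integers ν and j, the matrix element of the multiplication operator M in the Laguerre basis satisfies (1/(j+1)) ∫₀^∞ e^{-t} e_ν(t) e_j(t) t e^{-t} dt = C(ν+j+1, ν) / 2^{ν+j+2}. -/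
open Set MeasureTheory Real

/-- The Laguerre polynomials `e_ν(t) = Σ_{m=0}^{ν} C(ν+1, ν−m) (−t)^m / m!`. -/
noncomputable def lagE (ν : ℕ) (t : ℝ) : ℝ :=
  ∑ m ∈ Finset.range (ν+1), (Nat.choose (ν+1) (ν-m) : ℝ) * (-t)^m / m.factorial

/-!
Substituting `t = s / 2` turns the integral into `¼ ∫₀^∞ e_ν(s/2) e_j(s/2) s e^{-s} ds`.
The multiplication theorem `e_ν(s/2) = 2^{-ν} ∑ᵢ C(ν+1, i+1) eᵢ(s)` and the orthogonality
relations `∫₀^∞ eᵢ eₗ s e^{-s} ds = δᵢₗ (i+1)` reduce it to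
`2^{-ν-j-2} ∑ᵢ (i+1) C(ν+1, i+1) C(j+1, i+1)`, which is `(j+1) C(ν+j+1, ν) / 2^{ν+j+2}` by
Vandermonde's identity. Orthogonality comes from
`∫₀^∞ eᵢ(s) s^{k+1} e^{-s} ds = (-1)^i (k+1)! C(k, i)`, an `(i+1)`-st forward difference of
`x ↦ C(x, k+1)`: it vanishes for `k < i`, and the form is symmetric.
-/

open Polynomial Finset Nat

noncomputable def gammaMoment : ℝ[X] →ₗ[ℝ] ℝ := lsum fun n => (n ! : ℝ) • LinearMap.id

@[simp]
lemma gammaMoment_monomial (n : ℕ) (a : ℝ) : gammaMoment (monomial n a) = n ! * a := by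
  simp [gammaMoment, sum_monomial_index]

lemma gammaMoment_C_mul (c : ℝ) (p : ℝ[X]) : gammaMoment (C c * p) = c * gammaMoment p := by
  rw [← smul_eq_C_mul, map_smul, smul_eq_mul]

lemma integral_pow_mul_exp_neg (n : ℕ) : ∫ t in Ioi (0:ℝ), t ^ n * exp (-t) = n ! := by
  rw [← Real.Gamma_nat_eq_factorial, Real.Gamma_eq_integral (by positivity)]
  refine setIntegral_congr_fun measurableSet_Ioi fun t _ => ?_
  simp [mul_comm, ← Real.rpow_natCast]

lemma integrableOn_eval_mul_exp_neg (p : ℝ[X]) :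
    IntegrableOn (fun t => p.eval t * exp (-t)) (Ioi 0) := by
  induction p using Polynomial.induction_on' with
  | add p q hp hq =>
    exact (hp.add hq).congr_fun (fun t _ => by simp [add_mul]) measurableSet_Ioi
  | monomial n a =>
    have h : IntegrableOn (fun t => a * (exp (-t) * t ^ ((n + 1 : ℝ) - 1))) (Ioi 0) :=
      (Real.GammaIntegral_convergent (by positivity)).const_mul a
    refine h.congr_fun (fun t _ => ?_) measurableSet_Ioi
    simp [← Real.rpow_natCast, mul_comm, mul_assoc]

lemma integral_eval_mul_exp_neg (p : ℝ[X]) :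
    ∫ t in Ioi (0:ℝ), p.eval t * exp (-t) = gammaMoment p := by
  induction p using Polynomial.induction_on' with
  | add p q hp hq =>
    simp only [eval_add, add_mul, map_add]
    rw [integral_add (integrableOn_eval_mul_exp_neg p) (integrableOn_eval_mul_exp_neg q),
      hp, hq]
  | monomial n a =>
    simp only [eval_monomial, gammaMoment_monomial, mul_assoc, integral_const_mul,
      integral_pow_mul_exp_neg]
    ring

lemma fwdDiff_iter_choose_apply (m n y : ℕ) :
    (fwdDiff 1)^[n] (fun x ↦ (x.choose m : ℤ)) y
      = if n ≤ m then (y.choose (m - n) : ℤ) else 0 := by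
  split_ifs with h
  · obtain ⟨j, rfl⟩ := Nat.exists_eq_add_of_le h
    simp [fwdDiff_iter_choose]
  · obtain ⟨k, rfl⟩ := Nat.exists_eq_add_of_lt (not_le.mp h)
    have h0 := fwdDiff_iter_choose 0 m
    rw [add_zero] at h0
    rw [show m + k + 1 = k + 1 + m by ring, Function.iterate_add_apply, h0,
      Function.iterate_succ_apply]
    simp [fwdDiff_iter_eq_sum_shift]

lemma sum_choose_mul_choose (n k : ℕ) :
    ∑ i ∈ range (n + 1), n.choose i * i.choose k = n.choose k * 2 ^ (n - k) := by
  rcases le_or_gt k n with hkn | hnk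
  · obtain ⟨d, rfl⟩ := Nat.exists_eq_add_of_le hkn
    rw [show k + d + 1 = k + (d + 1) by ring, sum_range_add, add_tsub_cancel_left,
      sum_eq_zero fun i hi => by rw [choose_eq_zero_of_lt (mem_range.mp hi), mul_zero], zero_add,
      ← sum_range_choose, mul_sum]
    refine sum_congr rfl fun s _ => ?_
    rw [choose_mul (le_add_right k s), add_tsub_cancel_left, add_tsub_cancel_left]
  · rw [choose_eq_zero_of_lt hnk, zero_mul]
    exact sum_eq_zero fun i hi => by
      rw [choose_eq_zero_of_lt (lt_of_le_of_lt (mem_range_succ_iff.mp hi) hnk), mul_zero]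

lemma sum_choose_succ_mul_choose (n j : ℕ) :
    ∑ i ∈ range (n + 1), (n + 1).choose (i + 1) * j.choose i = (n + 1 + j).choose n := by
  rw [add_choose_eq, ← Nat.sum_antidiagonal_swap,
    Finset.Nat.sum_antidiagonal_eq_sum_range_succ_mk]
  refine sum_congr rfl fun i hi => ?_
  have hi : i ≤ n := mem_range_succ_iff.mp hi
  rw [Prod.swap, choose_symm_of_eq_add (by omega : n + 1 = (i + 1) + (n - i))]

noncomputable def lagCoeff (ν m : ℕ) : ℝ := (-1) ^ m * (ν + 1).choose (m + 1) / m !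

noncomputable def lagPoly (ν : ℕ) : ℝ[X] := ∑ m ∈ range (ν + 1), C (lagCoeff ν m) * X ^ m

lemma lagCoeff_eq_zero {ν m : ℕ} (h : ν < m) : lagCoeff ν m = 0 := by
  simp [lagCoeff, choose_eq_zero_of_lt (succ_lt_succ h)]

lemma coeff_lagPoly (ν m : ℕ) : (lagPoly ν).coeff m = lagCoeff ν m := by
  simp only [lagPoly, finsetSum_coeff, coeff_C_mul_X_pow, sum_ite_eq, Finset.mem_range]
  split_ifs with h
  · rfl
  · exact (lagCoeff_eq_zero (by omega)).symm

lemma eval_lagPoly (ν : ℕ) (t : ℝ) : (lagPoly ν).eval t = lagE ν t := by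
  simp only [lagPoly, lagE, eval_finsetSum, eval_mul, eval_C, eval_pow, eval_X]
  refine sum_congr rfl fun m hm => ?_
  rw [lagCoeff, choose_symm_of_eq_add (by have := mem_range_succ_iff.mp hm; omega :
    ν + 1 = (m + 1) + (ν - m)), neg_pow]
  ring

lemma sum_lagCoeff_mul_factorial (i k : ℕ) :
    ∑ m ∈ range (i + 1), lagCoeff i m * (m + k + 1)! = (-1) ^ i * (k + 1)! * k.choose i := by
  have hΔ := fwdDiff_iter_eq_sum_shift 1 (fun x ↦ (x.choose (k + 1) : ℤ)) (i + 1) k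
  rw [fwdDiff_iter_choose_apply, sum_range_succ'] at hΔ
  have hdiff : ∑ m ∈ range (i + 1),
      (-1 : ℝ) ^ (i - m) * (i + 1).choose (m + 1) * (k + (m + 1)).choose (k + 1)
        = k.choose i := by
    simp only [add_le_add_iff_right, reduceSubDiff, Int.reduceNeg, smul_eq_mul, mul_one,
      tsub_zero, choose_zero_right, cast_one, add_zero,
      choose_succ_self, CharP.cast_eq_zero, mul_zero] at hΔ
    have hlhs : (if i ≤ k then (k.choose (k - i) : ℤ) else 0) = k.choose i := by
      split_ifs with h
      · rw [choose_symm h]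
      · rw [choose_eq_zero_of_lt (not_le.mp h), cast_zero]
    rw [hlhs] at hΔ
    exact_mod_cast hΔ.symm
  rw [← hdiff, mul_sum]
  refine sum_congr rfl fun m hm => ?_
  have hmi : m ≤ i := mem_range_succ_iff.mp hm
  have hfact : ((m + k + 1)! : ℝ) = (k + (m + 1)).choose (k + 1) * (k + 1)! * m ! := by
    have := choose_mul_factorial_mul_factorial (le_add_right (k + 1) m)
    rw [add_tsub_cancel_left] at this
    rw [show k + (m + 1) = k + 1 + m by ring, show m + k + 1 = k + 1 + m by ring]
    exact_mod_cast this.symm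
  have hsign : (-1 : ℝ) ^ m = (-1) ^ i * (-1) ^ (i - m) := by
    rw [← pow_add, show i + (i - m) = m + 2 * (i - m) by omega, pow_add, pow_mul]
    simp
  rw [lagCoeff, hfact, hsign]
  field_simp

lemma gammaMoment_X_pow_mul_lagPoly (i k : ℕ) :
    gammaMoment (X ^ (k + 1) * lagPoly i) = (-1) ^ i * (k + 1)! * k.choose i := by
  rw [← sum_lagCoeff_mul_factorial, lagPoly, mul_sum, map_sum]
  refine sum_congr rfl fun m _ => ?_
  rw [mul_left_comm, ← pow_add, C_mul_X_pow_eq_monomial, gammaMoment_monomial, mul_comm,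
    show k + 1 + m = m + k + 1 by ring]

lemma gammaMoment_X_mul_lagPoly_mul_lagPoly_of_le {i l : ℕ} (h : l ≤ i) :
    gammaMoment (X * lagPoly i * lagPoly l) = if i = l then (i + 1 : ℝ) else 0 := by
  have hexp : gammaMoment (X * lagPoly i * lagPoly l)
      = ∑ k ∈ range (l + 1), lagCoeff l k * ((-1) ^ i * (k + 1)! * k.choose i) := by
    rw [lagPoly.eq_1 l, mul_sum, map_sum]
    refine sum_congr rfl fun k _ => ?_
    rw [← gammaMoment_X_pow_mul_lagPoly, ← gammaMoment_C_mul]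
    congr 1
    ring
  rw [hexp]
  split_ifs with hil
  · subst hil
    rw [sum_range_succ,
      sum_eq_zero fun k hk => by rw [choose_eq_zero_of_lt (mem_range.mp hk)]; simp]
    simp only [lagCoeff, choose_self, zero_add, cast_one, factorial_succ, cast_mul, cast_add]
    field_simp
    rw [← pow_mul, pow_mul', neg_one_sq, one_pow]
  · exact sum_eq_zero fun k hk => by
      rw [choose_eq_zero_of_lt (by have := mem_range_succ_iff.mp hk; omega)]; simp

lemma gammaMoment_X_mul_lagPoly_mul_lagPoly (i l : ℕ) :
    gammaMoment (X * lagPoly i * lagPoly l) = if i = l then (i + 1 : ℝ) else 0 := by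
  rcases le_total l i with h | h
  · exact gammaMoment_X_mul_lagPoly_mul_lagPoly_of_le h
  · rw [mul_right_comm, gammaMoment_X_mul_lagPoly_mul_lagPoly_of_le h]
    rcases eq_or_ne i l with rfl | hne
    · simp
    · simp [hne, hne.symm]

lemma lagPoly_comp_half (ν : ℕ) :
    (lagPoly ν).comp (C 2⁻¹ * X)
      = ∑ i ∈ range (ν + 1), C ((ν + 1).choose (i + 1) / 2 ^ ν : ℝ) * lagPoly i := by
  ext m
  simp only [comp_C_mul_X_coeff, coeff_lagPoly, finsetSum_coeff, coeff_C_mul]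
  rcases le_or_gt m ν with hm | hm
  · have hsum : ∑ i ∈ range (ν + 1), ((ν + 1).choose (i + 1) * (i + 1).choose (m + 1) : ℝ)
        = (ν + 1).choose (m + 1) * 2 ^ (ν - m) := by
      have := sum_choose_mul_choose (ν + 1) (m + 1)
      rw [sum_range_succ', choose_zero_succ, mul_zero, add_zero, Nat.add_sub_add_right] at this
      exact_mod_cast this
    have hfactor : ∑ i ∈ range (ν + 1), (ν + 1).choose (i + 1) / 2 ^ ν * lagCoeff i m
        = (-1) ^ m / (m ! * 2 ^ ν) * ∑ i ∈ range (ν + 1),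
            ((ν + 1).choose (i + 1) * (i + 1).choose (m + 1) : ℝ) := by
      rw [mul_sum]
      refine sum_congr rfl fun i _ => ?_
      rw [lagCoeff]
      ring
    rw [hfactor, hsum, lagCoeff, ← pow_mul_pow_sub 2 hm, inv_pow]
    field_simp
  · rw [lagCoeff_eq_zero hm, zero_mul]
    exact (sum_eq_zero fun i hi => by
      rw [lagCoeff_eq_zero (by have := mem_range_succ_iff.mp hi; omega), mul_zero]).symm

lemma gammaMoment_X_mul_lagPoly_comp_half_mul (ν j : ℕ) :
    gammaMoment (X * (lagPoly ν).comp (C 2⁻¹ * X) * (lagPoly j).comp (C 2⁻¹ * X))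
      = (j + 1) * (ν + j + 1).choose ν / 2 ^ (ν + j) := by
  simp only [lagPoly_comp_half, mul_sum, sum_mul, map_sum]
  have hterm : ∀ i l : ℕ,
      gammaMoment (X * (C ((ν + 1).choose (i + 1) / 2 ^ ν : ℝ) * lagPoly i)
        * (C ((j + 1).choose (l + 1) / 2 ^ j : ℝ) * lagPoly l))
      = (ν + 1).choose (i + 1) / 2 ^ ν * ((j + 1).choose (l + 1) / 2 ^ j)
          * if i = l then (i + 1 : ℝ) else 0 := by
    intro i l
    rw [← gammaMoment_X_mul_lagPoly_mul_lagPoly, ← gammaMoment_C_mul, C_mul]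
    congr 1
    ring
  simp only [hterm, mul_ite, mul_zero]
  rw [sum_comm]
  simp only [sum_ite_eq]
  have hvdm : ∑ i ∈ range (ν + 1), ((ν + 1).choose (i + 1) * j.choose i : ℝ)
      = (ν + j + 1).choose ν := by
    rw [add_right_comm]
    exact_mod_cast sum_choose_succ_mul_choose ν j
  rw [mul_div_right_comm, ← hvdm, mul_sum]
  refine sum_congr rfl fun i _ => ?_
  split_ifs with hij
  · have hchoose : ((j + 1).choose (i + 1) * (i + 1) : ℝ) = (j + 1) * j.choose i := by
      exact_mod_cast (add_one_mul_choose_eq j i).symm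
    rw [pow_add]
    linear_combination (ν + 1).choose (i + 1) / (2 ^ ν * 2 ^ j) * hchoose
  · rw [choose_eq_zero_of_lt (show j < i by rw [Finset.mem_range] at hij; omega)]
    simp

/-- Matrix elements of the multiplication operator `(Mφ)(t) = e^{-t}φ(t)` in the
Laguerre basis: `(1/(j+1)) (M e_ν, e_j) = C(ν+j+1, ν)/2^{ν+j+2}`. -/
theorem mult_op_matrix_elements (ν j : ℕ) :
    (1/(j+1 : ℝ)) * ∫ t in Ioi (0:ℝ),
        (Real.exp (-t) * lagE ν t) * lagE j t * (t * Real.exp (-t))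
      = (Nat.choose (ν+j+1) ν : ℝ) / 2^(ν+j+2) := by
  set P := X * (lagPoly ν).comp (C 2⁻¹ * X) * (lagPoly j).comp (C 2⁻¹ * X)
  have hintegrand : ∀ t : ℝ, exp (-t) * lagE ν t * lagE j t * (t * exp (-t))
      = 2⁻¹ * (P.eval (2 * t) * exp (-(2 * t))) := by
    intro t
    rw [show -(2 * t) = -t + -t by ring, exp_add]
    simp only [P, eval_mul, eval_X, eval_comp, eval_C,
      inv_mul_cancel_left₀ (two_ne_zero (α := ℝ)), eval_lagPoly]
    ring
  have hintegral : ∫ t in Ioi (0:ℝ), exp (-t) * lagE ν t * lagE j t * (t * exp (-t))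
      = 4⁻¹ * gammaMoment P := by
    simp_rw [hintegrand]
    rw [integral_const_mul, integral_comp_mul_left_Ioi (fun s => P.eval s * exp (-s)) 0 two_pos,
      mul_zero, integral_eval_mul_exp_neg, smul_eq_mul]
    ring
  rw [hintegral, gammaMoment_X_mul_lagPoly_comp_half_mul]
  field_simp
  ring
end

section
/- For every ν ≥ 0 and k ≥ 1 and t > 0, one has (1/t)∫₀^t s e^{-s} e_ν(s) (t−s)^{k−1} ds = ((ν+1)/(k(k+1))) t^{k} · ₁F₁(ν+2; k+2; −t), where ₁F₁ is the confluent hypergeometric function. -/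
open Set MeasureTheory Real intervalIntegral

/-- The Pochhammer symbol `(a)_n = a(a+1)⋯(a+n−1)` for real `a`. -/
noncomputable def poch (a : ℝ) (n : ℕ) : ℝ := ∏ i ∈ Finset.range n, (a + i)

/-- The Kummer confluent hypergeometric function `₁F₁(a;b;z)`. -/
noncomputable def hyp1F1 (a b z : ℝ) : ℝ :=
  ∑' n : ℕ, poch a n / poch b n * z^n / n.factorial

/-!
Multiplying the finite sum `e_ν` by the exponential series (a Cauchy product, collapsed by
Vandermonde's identity) gives `e^{-s} e_ν(s) = Σ (-1)ⁿ C(ν+n+1, n+1) sⁿ / n!`, which is Kummer's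
transformation `(ν+1) ₁F₁(ν+2; 2; -s)`. Integrating termwise against `s (t-s)^(k-1)` with the
Beta integral `∫₀^t s^a (t-s)^b ds = a! b! t^(a+b+1) / (a+b+1)!` turns the lower parameter `2`
into `k+2`.
-/

open Finset in
theorem Nat.add_choose_succ_eq (m n : ℕ) :
    (m + n).choose (n + 1) = ∑ ij ∈ antidiagonal n, m.choose (ij.1 + 1) * n.choose ij.2 := by
  rw [Nat.add_choose_eq, Finset.Nat.sum_antidiagonal_succ, Nat.choose_eq_zero_of_lt n.lt_succ_self,
    mul_zero, zero_add]

theorem poch_natCast_add_one_mul_factorial (a n : ℕ) :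
    poch ((a : ℝ) + 1) n * a.factorial = (a + n).factorial := by
  induction n with
  | zero => simp [poch]
  | succ n ih =>
    rw [poch, Finset.prod_range_succ, ← poch, mul_right_comm, ih, ← add_assoc, Nat.factorial_succ]
    push_cast
    ring

theorem integral_pow_mul_sub_pow (a b : ℕ) (t : ℝ) :
    ∫ s in (0:ℝ)..t, s ^ a * (t - s) ^ b
      = a.factorial * b.factorial / (a + b + 1).factorial * t ^ (a + b + 1) := by
  induction b generalizing a with
  | zero =>
    simp only [pow_zero, mul_one, integral_pow, zero_pow a.succ_ne_zero, sub_zero, add_zero,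
      Nat.factorial_zero, Nat.factorial_succ]
    push_cast
    field_simp
  | succ b ih =>
    have hsplit : ∀ s : ℝ, s ^ a * (t - s) ^ (b + 1)
        = t * (s ^ a * (t - s) ^ b) - s ^ (a + 1) * (t - s) ^ b := fun s => by ring
    simp_rw [hsplit]
    rw [intervalIntegral.integral_sub ((by fun_prop : Continuous _).intervalIntegrable _ _)
      ((by fun_prop : Continuous _).intervalIntegrable _ _), intervalIntegral.integral_const_mul,
      ih, ih, show a + 1 + b + 1 = a + b + 1 + 1 by ring,
      show a + (b + 1) + 1 = a + b + 1 + 1 by ring, Nat.factorial_succ (a + b + 1),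
      Nat.factorial_succ a, Nat.factorial_succ b]
    push_cast
    field_simp
    ring

theorem hasSum_integral_pow_mul_of_hasSum {c : ℕ → ℝ} {f g : ℝ → ℝ} {t : ℝ}
    (hf : ∀ s ∈ uIoc 0 t, HasSum (fun n => c n * s ^ n) (f s))
    (hc : Summable fun n => |c n| * |t| ^ n) (hg : Continuous g) :
    HasSum (fun n => c n * ∫ s in (0:ℝ)..t, s ^ n * g s) (∫ s in (0:ℝ)..t, f s * g s) := by
  simp_rw [← intervalIntegral.integral_const_mul, ← mul_assoc]
  refine intervalIntegral.hasSum_integral_of_dominated_convergence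
    (fun n s => |c n| * |t| ^ n * |g s|)
    (fun n => (by fun_prop : Continuous _).aestronglyMeasurable)
    (fun n => .of_forall fun s hs => ?_) (.of_forall fun s _ => hc.mul_right _) ?_
    (.of_forall fun s hs => (hf s hs).mul_right (g s))
  · have hst : |s| ≤ |t| := by simpa using abs_sub_left_of_mem_uIcc (uIoc_subset_uIcc hs)
    rw [norm_mul, norm_mul, norm_pow, Real.norm_eq_abs, Real.norm_eq_abs, Real.norm_eq_abs]
    gcongr
  · simp_rw [tsum_mul_right]
    exact (by fun_prop : Continuous _).intervalIntegrable _ _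

theorem lagE_eq_sum_choose_succ (ν : ℕ) (s : ℝ) :
    lagE ν s
      = ∑ m ∈ Finset.range (ν + 1), ((ν + 1).choose (m + 1) : ℝ) * (-s) ^ m / m.factorial := by
  refine Finset.sum_congr rfl fun m hm => ?_
  rw [Nat.choose_symm_of_eq_add (by grind : ν + 1 = ν - m + (m + 1))]

noncomputable def expLagCoeff (ν n : ℕ) : ℝ :=
  (-1) ^ n * (ν + 1 + n).choose (n + 1) / n.factorial

open Finset in
theorem hasSum_lagE_mul_exp_neg (ν : ℕ) (s : ℝ) :
    HasSum (fun n => expLagCoeff ν n * s ^ n) (lagE ν s * Real.exp (-s)) := by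
  set f : ℕ → ℝ := fun m => ((ν + 1).choose (m + 1) : ℝ) * (-s) ^ m / m.factorial
  set g : ℕ → ℝ := fun j => (-s) ^ j / j.factorial
  have hf_zero : ∀ m ∉ Finset.range (ν + 1), f m = 0 := fun m hm => by
    simp [f, Nat.choose_eq_zero_of_lt (by simpa using hm : ν + 1 < m + 1)]
  have hf : Summable fun m => ‖f m‖ :=
    summable_of_ne_finset_zero (s := Finset.range (ν + 1)) (by simpa using hf_zero)
  have hg : Summable fun j => ‖g j‖ := by
    simpa [g, norm_pow, norm_div] using Real.summable_pow_div_factorial |s|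
  have hcauchy : ∀ n, ∑ ij ∈ antidiagonal n, f ij.1 * g ij.2 = expLagCoeff ν n * s ^ n := by
    intro n
    rw [expLagCoeff, Nat.add_choose_succ_eq, Nat.cast_sum, Finset.mul_sum, Finset.sum_div,
      Finset.sum_mul]
    refine Finset.sum_congr rfl fun ⟨m, j⟩ hmj => ?_
    rw [HasAntidiagonal.mem_antidiagonal] at hmj
    subst hmj
    have hchoose : ((m + j).choose j : ℝ) ≠ 0 :=
      Nat.cast_ne_zero.2 (Nat.choose_pos (j.le_add_left m)).ne'
    simp only [f, g, neg_pow s, pow_add]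
    rw [← Nat.add_choose_mul_factorial_mul_factorial m j]
    push_cast
    field_simp
  have hlag : ∑' m, f m = lagE ν s := by
    rw [tsum_eq_sum hf_zero, lagE_eq_sum_choose_succ]
  have hexp : ∑' j, g j = Real.exp (-s) := by
    rw [Real.exp_eq_exp_ℝ, NormedSpace.exp_eq_tsum_div]
  rw [← hlag, ← hexp, tsum_mul_tsum_eq_tsum_sum_antidiagonal_of_summable_norm hf hg]
  simp_rw [← hcauchy]
  exact (summable_norm_sum_mul_antidiagonal_of_summable_norm hf hg).of_norm.hasSum

theorem summable_abs_expLagCoeff_mul_pow (ν : ℕ) (t : ℝ) :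
    Summable fun n => |expLagCoeff ν n| * |t| ^ n := by
  simpa only [abs_mul, abs_pow, abs_neg, abs_abs]
    using (hasSum_lagE_mul_exp_neg ν (-|t|)).summable.abs

theorem expLagCoeff_mul_integral (ν b n : ℕ) (t : ℝ) :
    expLagCoeff ν n * ∫ s in (0:ℝ)..t, s ^ n * (s * (t - s) ^ b)
      = (ν + 1) / ((b + 1) * (b + 2)) * t ^ (b + 2)
        * (poch (ν + 2) n / poch (b + 1 + 2) n * (-t) ^ n / n.factorial) := by
  have hpochν : poch (ν + 2) n = (ν + 1 + n).factorial / ((ν + 1) * ν.factorial) := by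
    have := poch_natCast_add_one_mul_factorial (ν + 1) n
    push_cast [Nat.factorial_succ] at this
    rw [eq_div_iff (by positivity), ← this]
    ring_nf
  have hpochb :
      poch (b + 1 + 2) n = (b + 2 + n).factorial / ((b + 2) * ((b + 1) * b.factorial)) := by
    have := poch_natCast_add_one_mul_factorial (b + 2) n
    push_cast [Nat.factorial_succ] at this
    rw [eq_div_iff (by positivity), ← this]
    ring_nf
  have hchoose : ((ν + 1 + n).choose (n + 1) : ℝ)
      = (ν + 1 + n).factorial / (ν.factorial * (n + 1).factorial) := by
    have := Nat.add_choose_mul_factorial_mul_factorial ν (n + 1)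
    rw [eq_div_iff (by positivity), show ν + 1 + n = ν + (n + 1) by ring]
    exact_mod_cast by rw [← this]; ring
  have hint : ∫ s in (0:ℝ)..t, s ^ n * (s * (t - s) ^ b)
      = (n + 1).factorial * b.factorial / (b + 2 + n).factorial * t ^ (b + 2 + n) := by
    simp_rw [← mul_assoc, ← pow_succ]
    rw [integral_pow_mul_sub_pow, show n + 1 + b + 1 = b + 2 + n by ring]
  rw [expLagCoeff, hint, hpochν, hpochb, hchoose, neg_pow t]
  field_simp
  ring

/-- `(1/t)∫₀^t s e^{-s} e_ν(s) (t−s)^{k−1} ds = ((ν+1)/(k(k+1))) tᵏ ₁F₁(ν+2;k+2;−t)`. -/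
theorem laguerre_convolution_hypergeometric (ν k : ℕ) (hk : 1 ≤ k) (t : ℝ) (ht : 0 < t) :
    (1/t) * ∫ s in (0:ℝ)..t, s * Real.exp (-s) * lagE ν s * (t-s)^(k-1)
      = ((ν+1 : ℝ)/(k*(k+1))) * t^k * hyp1F1 (ν+2) (k+2) (-t) := by
  obtain ⟨b, rfl⟩ : ∃ b, k = b + 1 := ⟨k - 1, by omega⟩
  have hseries := hasSum_integral_pow_mul_of_hasSum (fun s _ => hasSum_lagE_mul_exp_neg ν s)
    (summable_abs_expLagCoeff_mul_pow ν t) (g := fun s => s * (t - s) ^ b) (by fun_prop)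
  simp_rw [expLagCoeff_mul_integral] at hseries
  have hintegral : ∫ s in (0:ℝ)..t, s * Real.exp (-s) * lagE ν s * (t - s) ^ b
      = (ν + 1) / ((b + 1) * (b + 2)) * t ^ (b + 2) * hyp1F1 (ν + 2) (b + 1 + 2) (-t) := by
    rw [hyp1F1, ← tsum_mul_left, hseries.tsum_eq]
    exact intervalIntegral.integral_congr fun s _ => by ring
  rw [Nat.add_sub_cancel, hintegral]
  push_cast
  field_simp
  ring
end

section
/- For every n ≥ 0 and a > 0, ∫₀^∞ e^{-u} ∫₀^{u/a} e_{2n}(v)² dv du ≤ (2n+1)² · 2^{4(2n+1)} · max{ a^{-s} : s = 1, …, 4n+1 }. -/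
/-!
By Cauchy–Schwarz over the `ν + 1` terms of `e_ν` and `C(ν + 1, k) ≤ 2 ^ (ν + 1)`,
`e_ν(v)² ≤ (ν + 1) 4^(ν + 1) Σ_{m ≤ ν} v^(2m) / m!²`. Integrating termwise over `[0, u/a]` and
then against `e^{-u}` (a Gamma integral), the `m`-th term contributes
`(2m + 1)! / ((2m + 1) m!² a^(2m + 1)) = C(2m, m) a^{-(2m + 1)} ≤ 4^ν a^{-(2m + 1)}`.
-/

open Set MeasureTheory Real intervalIntegral

open Nat

theorem Nat.centralBinom_mul_factorial_sq (m : ℕ) : m.centralBinom * m ! ^ 2 = (2 * m)! := by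
  rw [centralBinom_eq_two_mul_choose, two_mul, sq, ← mul_assoc]
  exact add_choose_mul_factorial_mul_factorial m m

theorem factorial_two_mul_add_one_div_eq_centralBinom (m : ℕ) :
    ((2 * m + 1)! : ℝ) / ((2 * m + 1) * (m ! : ℝ) ^ 2) = m.centralBinom := by
  rw [factorial_succ, ← centralBinom_mul_factorial_sq]
  push_cast
  field_simp

theorem integrableOn_exp_neg_mul_pow (k : ℕ) :
    IntegrableOn (fun x : ℝ => exp (-x) * x ^ k) (Ioi 0) := by
  simpa using GammaIntegral_convergent (s := k + 1) (by positivity)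

theorem integral_exp_neg_mul_pow (k : ℕ) : ∫ x in Ioi (0 : ℝ), exp (-x) * x ^ k = k ! := by
  simpa [Gamma_nat_eq_factorial] using (Gamma_eq_integral (s := k + 1) (by positivity)).symm

theorem integrableOn_exp_neg_mul_div_pow (k : ℕ) (a : ℝ) :
    IntegrableOn (fun x : ℝ => exp (-x) * (x / a) ^ k) (Ioi 0) := by
  simp_rw [div_pow, ← mul_div_assoc]
  exact (integrableOn_exp_neg_mul_pow k).div_const (a ^ k)

theorem integral_exp_neg_mul_div_pow (k : ℕ) (a : ℝ) :
    ∫ x in Ioi (0 : ℝ), exp (-x) * (x / a) ^ k = k ! / a ^ k := by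
  simp_rw [div_pow, ← mul_div_assoc, MeasureTheory.integral_div, integral_exp_neg_mul_pow]

@[fun_prop]
theorem continuous_lagE (ν : ℕ) : Continuous (lagE ν) := by
  unfold lagE
  fun_prop

theorem sq_lagE_le (ν : ℕ) (v : ℝ) :
    lagE ν v ^ 2 ≤
      (ν + 1) * 4 ^ (ν + 1) * ∑ m ∈ Finset.range (ν + 1), v ^ (2 * m) / (m ! : ℝ) ^ 2 := by
  calc lagE ν v ^ 2
      ≤ (ν + 1) *
          ∑ m ∈ Finset.range (ν + 1), ((ν + 1).choose (ν - m) * (-v) ^ m / m ! : ℝ) ^ 2 := by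
        simpa [lagE] using sq_sum_le_card_mul_sum_sq (s := Finset.range (ν + 1))
          (f := fun m => ((ν + 1).choose (ν - m) * (-v) ^ m / m ! : ℝ))
    _ ≤ (ν + 1) * ∑ m ∈ Finset.range (ν + 1), 4 ^ (ν + 1) * (v ^ (2 * m) / (m ! : ℝ) ^ 2) := by
        gcongr with m
        have hchoose : ((ν + 1).choose (ν - m) : ℝ) ^ 2 ≤ 4 ^ (ν + 1) := by
          rw [show (4 : ℝ) = 2 ^ 2 by norm_num, ← pow_mul, mul_comm, pow_mul]
          gcongr
          exact_mod_cast choose_le_two_pow _ _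
        rw [div_pow, mul_pow, ← pow_mul, mul_comm m, (even_two_mul m).neg_pow, mul_div_assoc]
        gcongr
        exact div_nonneg ((even_two_mul m).pow_nonneg v) (by positivity)
    _ = _ := by rw [← Finset.mul_sum, mul_assoc]

theorem integral_sq_lagE_le (ν : ℕ) {T : ℝ} (hT : 0 ≤ T) :
    ∫ v in (0 : ℝ)..T, lagE ν v ^ 2 ≤ (ν + 1) * 4 ^ (ν + 1) *
      ∑ m ∈ Finset.range (ν + 1), T ^ (2 * m + 1) / ((2 * m + 1) * (m ! : ℝ) ^ 2) := by
  calc ∫ v in (0 : ℝ)..T, lagE ν v ^ 2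
      ≤ ∫ v in (0 : ℝ)..T, (ν + 1) * 4 ^ (ν + 1) *
          ∑ m ∈ Finset.range (ν + 1), v ^ (2 * m) / (m ! : ℝ) ^ 2 :=
        integral_mono_on hT (Continuous.intervalIntegrable (by fun_prop) _ _)
          (Continuous.intervalIntegrable (by fun_prop) _ _) fun v _ => sq_lagE_le ν v
    _ = _ := by
        rw [intervalIntegral.integral_const_mul,
          integral_finsetSum fun m _ => Continuous.intervalIntegrable (by fun_prop) _ _]
        congr 1
        refine Finset.sum_congr rfl fun m _ => ?_
        rw [intervalIntegral.integral_div, integral_pow]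
        push_cast
        field_simp
        ring

theorem integral_exp_neg_mul_integral_sq_lagE_le (ν : ℕ) {a : ℝ} (ha : 0 < a) :
    ∫ u in Ioi (0 : ℝ), exp (-u) * ∫ v in (0 : ℝ)..(u / a), lagE ν v ^ 2 ≤ (ν + 1) * 4 ^ (ν + 1) *
      ∑ m ∈ Finset.range (ν + 1), (m.centralBinom : ℝ) * a ^ (-((2 * m + 1 : ℕ) : ℤ)) := by
  set K : ℝ := (ν + 1) * 4 ^ (ν + 1)
  set bound : ℝ → ℝ := fun u => K * ∑ m ∈ Finset.range (ν + 1),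
    exp (-u) * (u / a) ^ (2 * m + 1) / ((2 * m + 1) * (m ! : ℝ) ^ 2)
  have h_int_term (m : ℕ) : IntegrableOn
      (fun u => exp (-u) * (u / a) ^ (2 * m + 1) / ((2 * m + 1) * (m ! : ℝ) ^ 2)) (Ioi 0) :=
    (integrableOn_exp_neg_mul_div_pow _ a).div_const _
  have h_int : IntegrableOn bound (Ioi 0) :=
    (integrable_finsetSum _ fun m _ => h_int_term m).const_mul K
  have h_nonneg : ∀ u ∈ Ioi (0 : ℝ), 0 ≤ exp (-u) * ∫ v in (0 : ℝ)..(u / a), lagE ν v ^ 2 :=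
    fun u hu => mul_nonneg (exp_pos _).le
      (integral_nonneg (div_nonneg (le_of_lt hu) ha.le) fun v _ => sq_nonneg _)
  have h_le : ∀ u ∈ Ioi (0 : ℝ), exp (-u) * ∫ v in (0 : ℝ)..(u / a), lagE ν v ^ 2 ≤ bound u := by
    intro u hu
    calc exp (-u) * ∫ v in (0 : ℝ)..(u / a), lagE ν v ^ 2
        ≤ exp (-u) * (K * ∑ m ∈ Finset.range (ν + 1),
            (u / a) ^ (2 * m + 1) / ((2 * m + 1) * (m ! : ℝ) ^ 2)) := by
          gcongr
          exact integral_sq_lagE_le ν (div_nonneg (le_of_lt hu) ha.le)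
      _ = bound u := by
          simp only [bound, Finset.mul_sum]
          refine Finset.sum_congr rfl fun m _ => ?_
          ring
  calc ∫ u in Ioi (0 : ℝ), exp (-u) * ∫ v in (0 : ℝ)..(u / a), lagE ν v ^ 2
      ≤ ∫ u in Ioi (0 : ℝ), bound u :=
        setIntegral_mono_of_nonneg h_nonneg h_le h_int
    _ = _ := by
        simp only [bound, MeasureTheory.integral_const_mul]
        rw [integral_finsetSum _ fun m _ => h_int_term m]
        congr 1
        refine Finset.sum_congr rfl fun m _ => ?_
        rw [MeasureTheory.integral_div, integral_exp_neg_mul_div_pow, div_right_comm,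
          factorial_two_mul_add_one_div_eq_centralBinom, zpow_neg, zpow_natCast, div_eq_mul_inv]

theorem sum_centralBinom_mul_zpow_le (ν : ℕ) {a : ℝ} (ha : 0 < a) :
    ∑ m ∈ Finset.range (ν + 1), (m.centralBinom : ℝ) * a ^ (-((2 * m + 1 : ℕ) : ℤ)) ≤
      (ν + 1) * 4 ^ ν *
        (Finset.Icc 1 (2 * ν + 1)).sup' (by simp) (fun s : ℕ => a ^ (-(s : ℤ))) := by
  set M := (Finset.Icc 1 (2 * ν + 1)).sup' (by simp) (fun s : ℕ => a ^ (-(s : ℤ)))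
  calc ∑ m ∈ Finset.range (ν + 1), (m.centralBinom : ℝ) * a ^ (-((2 * m + 1 : ℕ) : ℤ))
      ≤ ∑ m ∈ Finset.range (ν + 1), 4 ^ ν * M := by
        refine Finset.sum_le_sum fun m hm => ?_
        have hmν : m ≤ ν := Finset.mem_range_succ_iff.1 hm
        gcongr
        · calc (m.centralBinom : ℝ) ≤ 4 ^ m := by exact_mod_cast centralBinom_le_four_pow m
            _ ≤ 4 ^ ν := pow_le_pow_right₀ (by norm_num) hmν
        · exact Finset.le_sup' (fun s : ℕ => a ^ (-(s : ℤ))) (Finset.mem_Icc.2 ⟨by omega, by omega⟩)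
    _ = _ := by rw [Finset.sum_const, Finset.card_range, nsmul_eq_mul, mul_assoc]; push_cast; ring

/-- `∫₀^∞ e^{−u} ∫₀^{u/a} e_{2n}(v)² dv du ≤ (2n+1)² 2^{4(2n+1)} max{a^{−s} : 1 ≤ s ≤ 4n+1}`. -/
theorem laguerre_double_integral_bound (n : ℕ) (a : ℝ) (ha : 0 < a) :
    ∫ u in Ioi (0:ℝ), Real.exp (-u) * ∫ v in (0:ℝ)..(u/a), (lagE (2*n) v)^2
      ≤ ((2*n+1 : ℝ))^2 * 2^(4*(2*n+1)) *
        (Finset.Icc 1 (4*n+1)).sup' (by simp) (fun s : ℕ => a^(-(s:ℤ))) := by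
  set M := (Finset.Icc 1 (4*n+1)).sup' (by simp) (fun s : ℕ => a^(-(s:ℤ)))
  have hM : 0 ≤ M := (zpow_pos ha _).le.trans
    (Finset.le_sup' (fun s : ℕ => a ^ (-(s : ℤ))) (Finset.mem_Icc.2 ⟨le_rfl, by omega⟩ : 1 ∈ _))
  have h_sum := sum_centralBinom_mul_zpow_le (2 * n) ha
  simp only [show 2 * (2 * n) + 1 = 4 * n + 1 by ring] at h_sum
  have h_pow : (4 : ℝ) ^ (2 * n + 1) * 4 ^ (2 * n) ≤ 2 ^ (4 * (2 * n + 1)) := by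
    rw [← pow_add, pow_mul, show (2 : ℝ) ^ 4 = 4 ^ 2 by norm_num, ← pow_mul]
    exact pow_le_pow_right₀ (by norm_num) (by omega)
  calc _ ≤ (2 * n + 1 : ℝ) * 4 ^ (2 * n + 1) * ((2 * n + 1) * 4 ^ (2 * n) * M) := by
        have h := integral_exp_neg_mul_integral_sq_lagE_le (2 * n) ha
        push_cast at h h_sum ⊢
        exact h.trans (by gcongr)
    _ = (2 * n + 1 : ℝ) ^ 2 * (4 ^ (2 * n + 1) * 4 ^ (2 * n)) * M := by ring
    _ ≤ _ := by gcongr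
end
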